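/- Let σ_b^k (b ∈ {0,1}) be the equal mixtures over Ω_b^k of tensor products of |+⟩⟨+| (for bit 0) and |1⟩⟨1| (for bit 1), and let ρ_b^k be the equal mixtures over r ∈ Ω_b^k and s ∈ {0,1}^k of ⊗_j |r_j⟩_{s_j}⟨r_j|, where |0⟩₀=|0⟩, |1⟩₀=|1⟩, |0⟩₁=|+⟩, |1⟩₁=|−⟩. Define the channel U(τ) = (1/2^k) Σ_{i∈{0,1}^k} (H^{i₁}⊗⋯⊗H^{i_k}) τ (H^{i₁}⊗⋯⊗H^{i_k})†. Then U(σ₀^k) = ρ₀^k and U(σ₁^k) = ρ₁^k. -/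

import Mathlib

open Matrix Kronecker ComplexOrder

/-- `|M| = √(Mᴴ M)`, the positive-semidefinite absolute value of a matrix. -/
noncomputable def matAbs {n : Type*} [Fintype n] [DecidableEq n]
    (M : Matrix n n ℂ) : Matrix n n ℂ :=
  (Matrix.posSemidef_conjTranspose_mul_self M).isHermitian.eigenvectorUnitary.1 *
    diagonal ((↑) ∘ (√·) ∘ (Matrix.posSemidef_conjTranspose_mul_self M).isHermitian.eigenvalues) *
    (star (Matrix.posSemidef_conjTranspose_mul_self M).isHermitian.eigenvectorUnitary :
      Matrix n n ℂ)

/-- Trace distance `D(A,B) = (1/2) Tr |A - B|`. -/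
noncomputable def traceDist {n : Type*} [Fintype n] [DecidableEq n]
    (A B : Matrix n n ℂ) : ℝ :=
  (1 / 2) * (Matrix.trace (matAbs (A - B))).re

/-- |+⟩⟨+| -/
noncomputable def projPlus : Matrix (Fin 2) (Fin 2) ℂ := !![1/2, 1/2; 1/2, 1/2]

/-- |1⟩⟨1| -/
noncomputable def projOne : Matrix (Fin 2) (Fin 2) ℂ := !![0, 0; 0, 1]

/-- |φ₀⟩⟨φ₀| = |+⟩⟨+| and |φ₁⟩⟨φ₁| = |1⟩⟨1| -/
noncomputable def phiProj : Fin 2 → Matrix (Fin 2) (Fin 2) ℂ := ![projPlus, projOne]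

/-- σ_b^k : equal mixture over Ω_b^k of ⊗_j |φ_{i_j}⟩⟨φ_{i_j}|. -/
noncomputable def sigmaMix (b : Fin 2) (k : ℕ) :
    Matrix (Fin k → Fin 2) (Fin k → Fin 2) ℂ :=
  ((2 : ℂ) ^ (k - 1))⁻¹ •
    ∑ i ∈ Finset.univ.filter (fun i : Fin k → Fin 2 => ∑ j, i j = b),
      Matrix.of fun x y => ∏ j, phiProj (i j) (x j) (y j)

/-- the conjugate-coding states |r⟩_s : |0⟩₀=|0⟩, |1⟩₀=|1⟩, |0⟩₁=|+⟩, |1⟩₁=|−⟩. -/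
noncomputable def cket (r s : Fin 2) : Fin 2 → ℂ :=
  if s = 0 then (if r = 0 then ![1, 0] else ![0, 1])
  else (if r = 0 then ![(Real.sqrt 2 / 2 : ℂ), (Real.sqrt 2 / 2 : ℂ)]
        else ![(Real.sqrt 2 / 2 : ℂ), -(Real.sqrt 2 / 2 : ℂ)])

/-- |r⟩_s⟨r| -/
noncomputable def cProj (r s : Fin 2) : Matrix (Fin 2) (Fin 2) ℂ :=
  Matrix.vecMulVec (cket r s) (star (cket r s))

/-- ρ_b^k : equal mixture over keys s ∈ {0,1}^k and r ∈ Ω_b^k of ⊗_j |r_j⟩_{s_j}⟨r_j|. -/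
noncomputable def rhoMix (b : Fin 2) (k : ℕ) :
    Matrix (Fin k → Fin 2) (Fin k → Fin 2) ℂ :=
  ((2 : ℂ) ^ (2 * k - 1))⁻¹ •
    ∑ r ∈ Finset.univ.filter (fun r : Fin k → Fin 2 => ∑ j, r j = b),
      ∑ s : Fin k → Fin 2,
        Matrix.of fun x y => ∏ j, cProj (r j) (s j) (x j) (y j)

/-- the Hadamard matrix -/
noncomputable def Hmat : Matrix (Fin 2) (Fin 2) ℂ :=
  ((Real.sqrt 2 / 2 : ℝ) : ℂ) • !![1, 1; 1, -1]

/-- H⁰ = I and H¹ = H -/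
noncomputable def Hpow : Fin 2 → Matrix (Fin 2) (Fin 2) ℂ := ![1, Hmat]

/-- H^{i₁} ⊗ ⋯ ⊗ H^{i_k} -/
noncomputable def Hten {k : ℕ} (i : Fin k → Fin 2) :
    Matrix (Fin k → Fin 2) (Fin k → Fin 2) ℂ :=
  Matrix.of fun x y => ∏ j, Hpow (i j) (x j) (y j)

/-- the random-Hadamard channel U(τ) = 2^{-k} Σ_i H_i τ H_iᴴ -/
noncomputable def hadChan {k : ℕ} (τ : Matrix (Fin k → Fin 2) (Fin k → Fin 2) ℂ) :
    Matrix (Fin k → Fin 2) (Fin k → Fin 2) ℂ :=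
  ((2 : ℂ) ^ k)⁻¹ • ∑ i : Fin k → Fin 2, Hten i * τ * (Hten i)ᴴ

/-!
Conjugation by `H^{i₁} ⊗ ⋯ ⊗ H^{i_k}` acts factorwise on a product state, and on one qubit
`H^i |φ_r⟩⟨φ_r| H^i = |r⟩_{i+r+1}⟨r|`. For fixed `r`, the key `s = i + r + 1` runs over all of
`{0,1}^k` as `i` does, so averaging over `i` turns each term of `σ_b^k` into the uniform mixture
over keys that makes up `ρ_b^k`; the weights combine as `2^{-k} · 2^{-(k-1)} = 2^{-(2k-1)}`.
-/

namespace Matrix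

variable {ι l m n R : Type*} [Fintype ι]

def kroneckerPi [CommMonoid R] (M : ι → Matrix m n R) : Matrix (ι → m) (ι → n) R :=
  of fun x y => ∏ j, M j (x j) (y j)

theorem kroneckerPi_mul [DecidableEq ι] [Fintype m] [CommSemiring R]
    (M : ι → Matrix l m R) (N : ι → Matrix m n R) :
    kroneckerPi M * kroneckerPi N = kroneckerPi fun j => M j * N j := by
  ext x y
  simp only [kroneckerPi, mul_apply, of_apply, ← Finset.prod_mul_distrib]
  exact (Fintype.prod_sum fun j z => M j (x j) z * N j z (y j)).symm

theorem kroneckerPi_conjTranspose [CommMonoid R] [StarMul R] (M : ι → Matrix m n R) :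
    (kroneckerPi M)ᴴ = kroneckerPi fun j => (M j)ᴴ := by
  ext x y
  simp [kroneckerPi, conjTranspose_apply, star_prod]

end Matrix

theorem Hten_eq_kroneckerPi {k : ℕ} (i : Fin k → Fin 2) : Hten i = kroneckerPi (Hpow ∘ i) := rfl

theorem Hpow_mul_phiProj_mul_conjTranspose (i r : Fin 2) :
    Hpow i * phiProj r * (Hpow i)ᴴ = cProj r (i + (r + 1)) := by
  have h2 : ((Real.sqrt 2 : ℝ) : ℂ) ^ 2 = 2 := by
    norm_cast
    exact Real.sq_sqrt (by norm_num)
  fin_cases i <;> fin_cases r <;>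
    ext a b <;> fin_cases a <;> fin_cases b <;>
    simp [Hpow, Hmat, phiProj, projPlus, projOne, cProj, cket, mul_apply,
      Fin.sum_univ_two, vecMulVec_apply, conjTranspose_apply] <;>
    ring_nf <;> simp [h2, Complex.conj_ofNat] <;> norm_num

section

variable {k : ℕ}

theorem hadChan_smul (c : ℂ) (τ : Matrix (Fin k → Fin 2) (Fin k → Fin 2) ℂ) :
    hadChan (c • τ) = c • hadChan τ := by
  simp only [hadChan, Matrix.mul_smul, Matrix.smul_mul, Finset.smul_sum, smul_comm c]

theorem hadChan_sum {α : Type*} (s : Finset α)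
    (τ : α → Matrix (Fin k → Fin 2) (Fin k → Fin 2) ℂ) :
    hadChan (∑ a ∈ s, τ a) = ∑ a ∈ s, hadChan (τ a) := by
  simp only [hadChan, Matrix.mul_sum, Matrix.sum_mul, ← Finset.smul_sum]
  rw [Finset.sum_comm]

theorem hadChan_kroneckerPi_phiProj (r : Fin k → Fin 2) :
    hadChan (kroneckerPi (phiProj ∘ r)) =
      ((2 : ℂ) ^ k)⁻¹ • ∑ s : Fin k → Fin 2, kroneckerPi fun j => cProj (r j) (s j) := by
  simp only [hadChan, Hten_eq_kroneckerPi, kroneckerPi_conjTranspose, kroneckerPi_mul,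
    Function.comp_apply, Hpow_mul_phiProj_mul_conjTranspose]
  congr 1
  exact Equiv.sum_comp (Equiv.addRight (r + 1)) fun s => kroneckerPi fun j => cProj (r j) (s j)

theorem hadChan_sigmaMix (b : Fin 2) : hadChan (sigmaMix b k) = rhoMix b k := by
  have hweight : ((2 : ℂ) ^ (k - 1))⁻¹ * ((2 : ℂ) ^ k)⁻¹ = ((2 : ℂ) ^ (2 * k - 1))⁻¹ := by
    rw [← mul_inv, ← pow_add, show k - 1 + k = 2 * k - 1 by omega]
  show hadChan (((2 : ℂ) ^ (k - 1))⁻¹ • ∑ r ∈ _, kroneckerPi (phiProj ∘ r)) = _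
  rw [hadChan_smul, hadChan_sum]
  simp only [hadChan_kroneckerPi_phiProj, ← Finset.smul_sum, smul_smul, hweight]
  rfl

end

theorem hadChan_sigmaMix_eq_rhoMix_general (k : ℕ) :
    hadChan (sigmaMix 0 k) = rhoMix 0 k ∧ hadChan (sigmaMix 1 k) = rhoMix 1 k :=
  ⟨hadChan_sigmaMix 0, hadChan_sigmaMix 1⟩

theorem hadChan_sigmaMix_eq_rhoMix (k : ℕ) (hk : 1 ≤ k) :
    hadChan (sigmaMix 0 k) = rhoMix 0 k ∧ hadChan (sigmaMix 1 k) = rhoMix 1 k :=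
  hadChan_sigmaMix_eq_rhoMix_general k
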